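/- arXiv:2206.05792 — 3 statements merged into one kernel-verified Lean document; each statement's English description precedes it below -/
import Mathlib

section
/- Let B be an n×n real matrix with nonpositive off-diagonal entries. If all leading principal minors of B are positive, then B is invertible and B^{-1} has all entries nonnegative. -/
open Matrix

/-- The `k`-th leading principal minor of a square matrix: the determinant of its
top-left `k × k` submatrix. -/
noncomputable def leadingMinor {n : ℕ} (B : Matrix (Fin n) (Fin n) ℝ) (k : ℕ)
    (hk : k ≤ n) : ℝ :=
  (B.submatrix (fun i : Fin k => Fin.castLE hk i) (fun j : Fin k => Fin.castLE hk j)).det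

private lemma mul_nonneg_entries {α β γ : Type*} [Fintype β] {M : Matrix α β ℝ}
    {N : Matrix β γ ℝ} (hM : ∀ i j, 0 ≤ M i j) (hN : ∀ i j, 0 ≤ N i j) :
    ∀ i j, 0 ≤ (M * N) i j := fun i j => by
  rw [Matrix.mul_apply]
  exact Finset.sum_nonneg fun k _ => mul_nonneg (hM i k) (hN k j)

private lemma mul_nonpos_entries {α β γ : Type*} [Fintype β] {M : Matrix α β ℝ}
    {N : Matrix β γ ℝ} (hM : ∀ i j, 0 ≤ M i j) (hN : ∀ i j, N i j ≤ 0) :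
    ∀ i j, (M * N) i j ≤ 0 := fun i j => by
  rw [Matrix.mul_apply]
  exact Finset.sum_nonpos fun k _ => mul_nonpos_of_nonneg_of_nonpos (hM i k) (hN k j)

private lemma mul_nonpos_entries' {α β γ : Type*} [Fintype β] {M : Matrix α β ℝ}
    {N : Matrix β γ ℝ} (hM : ∀ i j, M i j ≤ 0) (hN : ∀ i j, 0 ≤ N i j) :
    ∀ i j, (M * N) i j ≤ 0 := fun i j => by
  rw [Matrix.mul_apply]
  exact Finset.sum_nonpos fun k _ => mul_nonpos_of_nonpos_of_nonneg (hM i k) (hN k j)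

private lemma mul_nonneg_entries' {α β γ : Type*} [Fintype β] {M : Matrix α β ℝ}
    {N : Matrix β γ ℝ} (hM : ∀ i j, M i j ≤ 0) (hN : ∀ i j, N i j ≤ 0) :
    ∀ i j, 0 ≤ (M * N) i j := fun i j => by
  rw [Matrix.mul_apply]
  exact Finset.sum_nonneg fun k _ => (by nlinarith [hM i k, hN k j] : (0:ℝ) ≤ M i k * N k j)

theorem stmt11 {n : ℕ} (B : Matrix (Fin n) (Fin n) ℝ)
    (hoff : ∀ i j, i ≠ j → B i j ≤ 0)
    (hminor : ∀ k : ℕ, ∀ hk : k ≤ n, 0 < k → 0 < leadingMinor B k hk) :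
    IsUnit B ∧ ∀ i j, 0 ≤ B⁻¹ i j := by
  induction n with
  | zero =>
    refine ⟨(Matrix.isUnit_iff_isUnit_det B).mpr (by simp [Matrix.det_fin_zero]), fun i => i.elim0⟩
  | succ n ih =>
    set e : Fin n ⊕ Fin 1 ≃ Fin (n + 1) := finSumFinEquiv with he
    set A : Matrix (Fin n) (Fin n) ℝ :=
      Matrix.of fun i j => B (e (Sum.inl i)) (e (Sum.inl j)) with hA
    set b : Matrix (Fin n) (Fin 1) ℝ :=
      Matrix.of fun i j => B (e (Sum.inl i)) (e (Sum.inr j)) with hb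
    set c : Matrix (Fin 1) (Fin n) ℝ :=
      Matrix.of fun i j => B (e (Sum.inr i)) (e (Sum.inl j)) with hc
    set d : Matrix (Fin 1) (Fin 1) ℝ :=
      Matrix.of fun i j => B (e (Sum.inr i)) (e (Sum.inr j)) with hd
    have hC : B.submatrix e e = Matrix.fromBlocks A b c d := by
      ext i j
      cases i <;> cases j <;> rfl
    -- determinant of B is positive
    have hdetB : 0 < B.det := by
      have h := hminor (n + 1) le_rfl (Nat.succ_pos n)
      have : leadingMinor B (n + 1) le_rfl = B.det := by
        unfold leadingMinor
        congr 1
      rwa [this] at h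
    -- hypotheses for the induction on A
    have hoffA : ∀ i j, i ≠ j → A i j ≤ 0 := fun i j hij =>
      hoff _ _ fun h => hij (Sum.inl.inj (e.injective h))
    have hminorA : ∀ k : ℕ, ∀ hk : k ≤ n, 0 < k → 0 < leadingMinor A k hk := by
      intro k hk hk0
      have h2 : leadingMinor A k hk = leadingMinor B k (hk.trans n.le_succ) := by
        unfold leadingMinor
        congr 1
      rw [h2]
      exact hminor k _ hk0
    obtain ⟨hAunit, hAinvnn⟩ := ih A hoffA hminorA
    have hAdet : IsUnit A.det := (Matrix.isUnit_iff_isUnit_det A).mp hAunit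
    letI : Invertible A := A.invertibleOfIsUnitDet hAdet
    have hAi : ⅟A = A⁻¹ := invOf_eq_nonsing_inv A
    have hAinn : ∀ i j, 0 ≤ (⅟A) i j := by rw [hAi]; exact hAinvnn
    -- positivity of det A
    have hdetA : 0 < A.det := by
      rcases Nat.eq_zero_or_pos n with h0 | h0
      · subst h0; simp [Matrix.det_fin_zero]
      · have h := hminorA n le_rfl h0
        have : leadingMinor A n le_rfl = A.det := by
          unfold leadingMinor; congr 1
        rwa [this] at h
    -- the Schur complement
    set S : Matrix (Fin 1) (Fin 1) ℝ := d - c * ⅟A * b with hS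
    have hdetC : 0 < (Matrix.fromBlocks A b c d).det := by
      rw [← hC, Matrix.det_submatrix_equiv_self]
      exact hdetB
    have hdetS : 0 < S.det := by
      have hf := Matrix.det_fromBlocks₁₁ A b c d
      rw [hf] at hdetC
      nlinarith [hdetC, hdetA]
    letI : Invertible S := S.invertibleOfIsUnitDet hdetS.ne'.isUnit
    letI : Invertible (Matrix.fromBlocks A b c d) := Matrix.fromBlocks₁₁Invertible A b c d
    have hinvC := Matrix.invOf_fromBlocks₁₁_eq A b c d
    -- sign facts about the blocks
    have hbnp : ∀ i j, b i j ≤ 0 := fun i j =>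
      hoff _ _ fun h => Sum.inl_ne_inr (e.injective h)
    have hcnp : ∀ i j, c i j ≤ 0 := fun i j =>
      hoff _ _ fun h => Sum.inr_ne_inl (e.injective h)
    -- the Schur complement's inverse is nonneg
    have hSentry : 0 < S 0 0 := by
      have : S.det = S 0 0 := Matrix.det_fin_one S
      rwa [this] at hdetS
    have hSinn : ∀ i j, 0 ≤ (⅟S) i j := by
      intro i j
      have hi : i = 0 := Subsingleton.elim i 0
      have hj : j = 0 := Subsingleton.elim j 0
      subst hi; subst hj
      have hmul : S 0 0 * (⅟S) 0 0 = 1 := by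
        have h := mul_invOf_self S
        have h00 := congrFun (congrFun h 0) 0
        rwa [Matrix.mul_apply, Fin.sum_univ_one, Matrix.one_apply_eq] at h00
      have : (⅟S) 0 0 = (S 0 0)⁻¹ := by
        field_simp at hmul ⊢
        linarith [hmul]
      rw [this]
      exact le_of_lt (inv_pos.mpr hSentry)
    -- every block of the inverse is nonneg
    have hblocks : ∀ i j, 0 ≤ (⅟(Matrix.fromBlocks A b c d)) i j := by
      rw [hinvC]
      rintro (i | i) (j | j)
      · show 0 ≤ (⅟A + ⅟A * b * ⅟S * c * ⅟A) i j
        have h1 : ∀ i j, (⅟A * b) i j ≤ 0 := mul_nonpos_entries hAinn hbnp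
        have h2 : ∀ i j, (⅟A * b * ⅟S) i j ≤ 0 := mul_nonpos_entries' h1 hSinn
        have h3 : ∀ i j, 0 ≤ (⅟A * b * ⅟S * c) i j := mul_nonneg_entries' h2 hcnp
        have h4 : ∀ i j, 0 ≤ (⅟A * b * ⅟S * c * ⅟A) i j := mul_nonneg_entries h3 hAinn
        exact add_nonneg (hAinn i j) (h4 i j)
      · show 0 ≤ (-(⅟A * b * ⅟S)) i j
        have h1 : ∀ i j, (⅟A * b) i j ≤ 0 := mul_nonpos_entries hAinn hbnp
        have h2 : ∀ i j, (⅟A * b * ⅟S) i j ≤ 0 := mul_nonpos_entries' h1 hSinn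
        simpa using h2 i j
      · show 0 ≤ (-(⅟S * c * ⅟A)) i j
        have h1 : ∀ i j, (⅟S * c) i j ≤ 0 := mul_nonpos_entries hSinn hcnp
        have h2 : ∀ i j, (⅟S * c * ⅟A) i j ≤ 0 := mul_nonpos_entries' h1 hAinn
        simpa using h2 i j
      · exact hSinn i j
    -- transfer back to B
    have hBunit : IsUnit B := (Matrix.isUnit_iff_isUnit_det B).mpr hdetB.ne'.isUnit
    refine ⟨hBunit, fun i j => ?_⟩
    have hCi : (Matrix.fromBlocks A b c d)⁻¹ = B⁻¹.submatrix e e := by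
      rw [← hC, Matrix.inv_submatrix_equiv]
    have hinv : (⅟(Matrix.fromBlocks A b c d)) = B⁻¹.submatrix e e := by
      rw [invOf_eq_nonsing_inv, hCi]
    have h := hblocks (e.symm i) (e.symm j)
    rw [hinv] at h
    simpa [Matrix.submatrix_apply] using h
end

section
/- Let A be an n×n matrix with nonnegative entries. Then the spectral radius of A is less than 1 if and only if all leading principal minors of B = I - A are positive. -/
open Matrix

/-- The spectral radius of a real square matrix: the supremum of the moduli of its
complex eigenvalues. -/
noncomputable def specRad {n : ℕ} (A : Matrix (Fin n) (Fin n) ℝ) : ℝ :=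
  sSup {r : ℝ | ∃ μ : ℂ, μ ∈ spectrum ℂ (A.map (algebraMap ℝ ℂ)) ∧ r = ‖μ‖}

namespace M12

section elementary

lemma mem_spectrum_iff' {m : ℕ} (N : Matrix (Fin m) (Fin m) ℂ) (μ : ℂ) :
    μ ∈ spectrum ℂ N ↔ (μ • (1 : Matrix (Fin m) (Fin m) ℂ) - N).det = 0 := by
  rw [spectrum.mem_iff, Algebra.algebraMap_eq_smul_one,
    Matrix.isUnit_iff_isUnit_det, isUnit_iff_ne_zero, not_not]

lemma exists_eigenvector {m : ℕ} {N : Matrix (Fin m) (Fin m) ℂ} {μ : ℂ}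
    (h : μ ∈ spectrum ℂ N) : ∃ v : Fin m → ℂ, v ≠ 0 ∧ N *ᵥ v = μ • v := by
  rw [mem_spectrum_iff'] at h
  obtain ⟨v, hv, hveq⟩ := (Matrix.exists_mulVec_eq_zero_iff).2 h
  refine ⟨v, hv, ?_⟩
  rw [Matrix.sub_mulVec, sub_eq_zero] at hveq
  simpa [Matrix.smul_mulVec, Matrix.one_mulVec] using hveq.symm

lemma abs_le_of_spec {m : ℕ} {A : Matrix (Fin m) (Fin m) ℝ} (hA : ∀ i j, 0 ≤ A i j)
    {x : Fin m → ℝ} (hx : ∀ i, 0 < x i) {θ : ℝ}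
    (hAx : ∀ i, (A *ᵥ x) i ≤ θ * x i) {μ : ℂ}
    (hμ : μ ∈ spectrum ℂ (A.map (algebraMap ℝ ℂ))) : ‖μ‖ ≤ θ := by
  obtain ⟨v, hv, hNv⟩ := exists_eigenvector hμ
  set w : Fin m → ℝ := fun i => ‖v i‖ with hwdef
  have hwle : ∀ i, ‖μ‖ * w i ≤ (A *ᵥ w) i := by
    intro i
    have h1 : (A.map (algebraMap ℝ ℂ) *ᵥ v) i = μ * v i := by
      rw [hNv]; simp
    have h2 : ‖μ‖ * w i = ‖(A.map (algebraMap ℝ ℂ) *ᵥ v) i‖ := by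
      rw [h1, norm_mul]
    rw [h2]
    calc ‖∑ j, (A.map (algebraMap ℝ ℂ)) i j * v j‖
        ≤ ∑ j, ‖(A.map (algebraMap ℝ ℂ)) i j * v j‖ := by
          simpa using norm_sum_le Finset.univ (fun j => (A.map (algebraMap ℝ ℂ)) i j * v j)
      _ = ∑ j, A i j * w j := by
          refine Finset.sum_congr rfl fun j _ => ?_
          rw [norm_mul, Matrix.map_apply]
          show ‖(algebraMap ℝ ℂ) (A i j)‖ * ‖v j‖ = A i j * w j
          rw [Complex.coe_algebraMap, Complex.norm_real, Real.norm_eq_abs, abs_of_nonneg (hA i j)]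
      _ = (A *ᵥ w) i := rfl
  obtain ⟨i1, hi1⟩ : ∃ i, v i ≠ 0 := Function.ne_iff.mp hv
  have hne : (Finset.univ : Finset (Fin m)).Nonempty := ⟨i1, Finset.mem_univ i1⟩
  obtain ⟨i0, -, hi0⟩ := Finset.exists_max_image Finset.univ (fun i => w i / x i) hne
  set c := w i0 / x i0 with hc
  have hcpos : 0 < c := lt_of_lt_of_le (by
      have h1 : 0 < w i1 := norm_pos_iff.mpr hi1
      exact div_pos h1 (hx i1)) (hi0 i1 (Finset.mem_univ i1))
  have hwc : ∀ j, w j ≤ c * x j := fun j => by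
    have := hi0 j (Finset.mem_univ j)
    rw [div_le_iff₀ (hx j)] at this
    linarith [this]
  have key : ‖μ‖ * (c * x i0) ≤ c * (θ * x i0) := by
    calc ‖μ‖ * (c * x i0) = ‖μ‖ * w i0 := by
          rw [hc, div_mul_cancel₀]; exact ne_of_gt (hx i0)
      _ ≤ (A *ᵥ w) i0 := hwle i0
      _ ≤ (A *ᵥ (fun j => c * x j)) i0 := by
          show ∑ j, A i0 j * w j ≤ ∑ j, A i0 j * (c * x j)
          exact Finset.sum_le_sum fun j _ =>
            mul_le_mul_of_nonneg_left (hwc j) (hA i0 j)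
      _ = c * (A *ᵥ x) i0 := by
          rw [Matrix.mulVec, Matrix.mulVec, dotProduct, dotProduct, Finset.mul_sum]
          exact Finset.sum_congr rfl fun j _ => by ring
      _ ≤ c * (θ * x i0) := mul_le_mul_of_nonneg_left (hAx i0) (le_of_lt hcpos)
  exact (mul_le_mul_iff_of_pos_right (mul_pos hcpos (hx i0))).mp
    (by linarith [key] : ‖μ‖ * (c * x i0) ≤ θ * (c * x i0))

lemma specRad_le_of_pos_vec {m : ℕ} {A : Matrix (Fin m) (Fin m) ℝ} (hA : ∀ i j, 0 ≤ A i j)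
    {x : Fin m → ℝ} (hx : ∀ i, 0 < x i) {θ : ℝ} (hθ : 0 ≤ θ)
    (hAx : ∀ i, (A *ᵥ x) i ≤ θ * x i) : specRad A ≤ θ := by
  refine Real.sSup_le ?_ hθ
  rintro r ⟨μ, hμ, rfl⟩
  exact abs_le_of_spec hA hx hAx hμ

end elementary
section part2

lemma entry_mul_nonneg {a b c : Type*} [Fintype b] {X : Matrix a b ℝ} {Y : Matrix b c ℝ}
    (hX : ∀ i j, 0 ≤ X i j) (hY : ∀ i j, 0 ≤ Y i j) : ∀ i j, 0 ≤ (X * Y) i j := fun i j =>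
  Finset.sum_nonneg fun l _ => mul_nonneg (hX i l) (hY l j)

lemma entry_mul_nonpos_left {a b c : Type*} [Fintype b] {X : Matrix a b ℝ} {Y : Matrix b c ℝ}
    (hX : ∀ i j, X i j ≤ 0) (hY : ∀ i j, 0 ≤ Y i j) : ∀ i j, (X * Y) i j ≤ 0 := fun i j =>
  Finset.sum_nonpos fun l _ => mul_nonpos_of_nonpos_of_nonneg (hX i l) (hY l j)

lemma entry_mul_nonpos_right {a b c : Type*} [Fintype b] {X : Matrix a b ℝ} {Y : Matrix b c ℝ}
    (hX : ∀ i j, 0 ≤ X i j) (hY : ∀ i j, Y i j ≤ 0) : ∀ i j, (X * Y) i j ≤ 0 := fun i j =>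
  Finset.sum_nonpos fun l _ => mul_nonpos_of_nonneg_of_nonpos (hX i l) (hY l j)

lemma entry_mul_nonneg_of_nonpos {a b c : Type*} [Fintype b] {X : Matrix a b ℝ} {Y : Matrix b c ℝ}
    (hX : ∀ i j, X i j ≤ 0) (hY : ∀ i j, Y i j ≤ 0) : ∀ i j, 0 ≤ (X * Y) i j := fun i j =>
  Finset.sum_nonneg fun l _ => mul_nonneg_of_nonpos_of_nonpos (hX i l) (hY l j)

lemma minor_transfer {m : ℕ} (A : Matrix (Fin (m+1)) (Fin (m+1)) ℝ) (k : ℕ) (hk : k ≤ m) :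
    leadingMinor (1 - A.submatrix Fin.castSucc Fin.castSucc) k hk
      = leadingMinor (1 - A) k (le_trans hk (Nat.le_succ m)) := by
  unfold leadingMinor
  congr 1
  ext i j
  have hcast : ∀ i : Fin k, Fin.castSucc (Fin.castLE hk i)
      = Fin.castLE (le_trans hk (Nat.le_succ m)) i := fun i => rfl
  simp only [Matrix.sub_apply, Matrix.submatrix_apply, hcast]
  congr 1
  by_cases h : i = j
  · subst h; simp
  · rw [Matrix.one_apply_ne fun hc => h (Fin.castLE_injective _ hc),
      Matrix.one_apply_ne fun hc => h (Fin.castLE_injective _ (by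
        apply Fin.castSucc_injective
        rw [hcast, hcast]; exact hc))]

/-- Main induction: positive leading minors give a nonnegative right inverse of `1 - A`. -/
lemma inv_nonneg_of_minors : ∀ m : ℕ, ∀ A : Matrix (Fin m) (Fin m) ℝ, (∀ i j, 0 ≤ A i j) →
    (∀ k (hk : k ≤ m), 0 < k → 0 < leadingMinor (1 - A) k hk) →
    0 < (1 - A).det ∧ ∃ N : Matrix (Fin m) (Fin m) ℝ, (1 - A) * N = 1 ∧ ∀ i j, 0 ≤ N i j := by
  intro m
  induction m with
  | zero =>
      intro A _ _
      refine ⟨by rw [Matrix.det_fin_zero]; norm_num, 1, ?_, fun i j => i.elim0⟩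
      have : (1 - A : Matrix (Fin 0) (Fin 0) ℝ) = 1 := Subsingleton.elim _ _
      rw [this, one_mul]
  | succ m ih =>
      intro A hA hminors
      set B := (1 : Matrix (Fin (m+1)) (Fin (m+1)) ℝ) - A with hBdef
      set Ah := A.submatrix Fin.castSucc Fin.castSucc with hAhdef
      set Bh := (1 : Matrix (Fin m) (Fin m) ℝ) - Ah with hBhdef
      obtain ⟨hdeth, Nh, hNh1, hNhpos⟩ := ih Ah (fun i j => hA _ _)
        (fun k hk hk0 => by rw [minor_transfer]; exact hminors k _ hk0)
      -- det B > 0 from the (m+1)-st minor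
      have hdetB : 0 < B.det := by
        have := hminors (m+1) le_rfl (Nat.succ_pos m)
        unfold leadingMinor at this
        have hid : (B.submatrix (fun i : Fin (m+1) => Fin.castLE le_rfl i)
            (fun j : Fin (m+1) => Fin.castLE le_rfl j)) = B := by
          ext i j; rfl
        rwa [hid] at this
      -- block decomposition
      set e : Fin m ⊕ Fin 1 ≃ Fin (m+1) := finSumFinEquiv with hedef
      set Q : Matrix (Fin m) (Fin 1) ℝ := fun i _ => B (Fin.castSucc i) (Fin.last m) with hQdef
      set R : Matrix (Fin 1) (Fin m) ℝ := fun _ j => B (Fin.last m) (Fin.castSucc j) with hRdef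
      set D : Matrix (Fin 1) (Fin 1) ℝ := fun _ _ => B (Fin.last m) (Fin.last m) with hDdef
      have hel : ∀ i : Fin m, e (Sum.inl i) = Fin.castSucc i := fun i => rfl
      have her : ∀ j : Fin 1, e (Sum.inr j) = Fin.last m := fun j => by
        have hj : j = 0 := Subsingleton.elim _ _
        subst hj
        rfl
      have hfb : B.submatrix e e = fromBlocks Bh Q R D := by
        ext i j
        cases i with
        | inl i => cases j with
          | inl j =>
              rw [Matrix.submatrix_apply, hel, hel]
              show B (Fin.castSucc i) (Fin.castSucc j) = Bh i j
              rw [hBdef, hBhdef, hAhdef]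
              simp only [Matrix.sub_apply, Matrix.submatrix_apply]
              congr 1
              by_cases h : i = j
              · subst h; rw [Matrix.one_apply_eq, Matrix.one_apply_eq]
              · rw [Matrix.one_apply_ne fun hc => h (Fin.castSucc_injective _ hc),
                  Matrix.one_apply_ne h]
          | inr j =>
              rw [Matrix.submatrix_apply, hel, her]
              rfl
        | inr i => cases j with
          | inl j =>
              rw [Matrix.submatrix_apply, her, hel]
              rfl
          | inr j =>
              rw [Matrix.submatrix_apply, her, her]
              rfl
      have hQ : ∀ i j, Q i j ≤ 0 := fun i j => by
        show B (Fin.castSucc i) (Fin.last m) ≤ 0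
        rw [hBdef]
        simp only [Matrix.sub_apply]
        rw [Matrix.one_apply_ne (Fin.castSucc_lt_last i).ne]
        simpa using hA _ _
      have hR : ∀ i j, R i j ≤ 0 := fun i j => by
        show B (Fin.last m) (Fin.castSucc j) ≤ 0
        rw [hBdef]
        simp only [Matrix.sub_apply]
        rw [Matrix.one_apply_ne (Fin.castSucc_lt_last j).ne']
        simpa using hA _ _
      -- invertibility of Bh
      haveI : Invertible Bh := Bh.invertibleOfIsUnitDet (isUnit_iff_ne_zero.mpr hdeth.ne')
      have hinvBh : ⅟Bh = Nh := invOf_eq_right_inv hNh1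
      -- Schur complement
      set S : Matrix (Fin 1) (Fin 1) ℝ := D - R * ⅟Bh * Q with hSdef
      have hdetfb : B.det = Bh.det * S.det := by
        rw [← Matrix.det_submatrix_equiv_self e B, hfb, Matrix.det_fromBlocks₁₁]
      have hdetS : 0 < S.det := by
        by_contra hcon
        push_neg at hcon
        nlinarith [hdetB, hdeth, hdetfb]
      have hS00 : S 0 0 = S.det := (Matrix.det_fin_one S).symm
      have hSnonneg : ∀ i j : Fin 1, 0 ≤ S i j := by
        intro i j
        have hi : i = 0 := Subsingleton.elim _ _
        have hj : j = 0 := Subsingleton.elim _ _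
        rw [hi, hj, hS00]; exact hdetS.le
      haveI : Invertible S := S.invertibleOfIsUnitDet (isUnit_iff_ne_zero.mpr hdetS.ne')
      have hinvS : ∀ i j : Fin 1, 0 ≤ (⅟S) i j := by
        intro i j
        have hi : i = 0 := Subsingleton.elim _ _
        have hj : j = 0 := Subsingleton.elim _ _
        have h1 : (S * ⅟S) 0 0 = 1 := by rw [mul_invOf_self]; simp
        have h2 : (S * ⅟S) 0 0 = S 0 0 * (⅟S) 0 0 := by
          rw [Matrix.mul_apply, Fin.sum_univ_one]
        rw [hi, hj]
        have hSpos : 0 < S 0 0 := by rw [hS00]; exact hdetS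
        nlinarith [h1, h2, hSpos]
      haveI : Invertible (fromBlocks Bh Q R D) := Matrix.fromBlocks₁₁Invertible Bh Q R D
      have hblockinv := Matrix.invOf_fromBlocks₁₁_eq Bh Q R D
      -- nonnegativity of the blocks of the inverse
      have hBhQ : ∀ i j, (⅟Bh * Q) i j ≤ 0 := by
        rw [hinvBh]; exact entry_mul_nonpos_right hNhpos hQ
      have hBhQS : ∀ i j, (⅟Bh * Q * ⅟S) i j ≤ 0 := entry_mul_nonpos_left hBhQ hinvS
      have hTL : ∀ i j, 0 ≤ (⅟Bh + ⅟Bh * Q * ⅟S * R * ⅟Bh) i j := by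
        intro i j
        have h1 : 0 ≤ (⅟Bh * Q * ⅟S * R * ⅟Bh) i j := by
          have h2 : ∀ i j, 0 ≤ (⅟Bh * Q * ⅟S * R) i j :=
            entry_mul_nonneg_of_nonpos hBhQS hR
          have h3 : ∀ i j, 0 ≤ (⅟Bh) i j := by rw [hinvBh]; exact hNhpos
          exact entry_mul_nonneg h2 h3 i j
        have h4 : 0 ≤ (⅟Bh) i j := by rw [hinvBh]; exact hNhpos i j
        simpa [Matrix.add_apply] using add_nonneg h4 h1
      have hTR : ∀ i j, 0 ≤ (-(⅟Bh * Q * ⅟S)) i j := fun i j => by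
        simpa [Matrix.neg_apply] using neg_nonneg.mpr (hBhQS i j)
      have hSR : ∀ i j, (⅟S * R) i j ≤ 0 := entry_mul_nonpos_right hinvS hR
      have hBL : ∀ i j, 0 ≤ (-(⅟S * R * ⅟Bh)) i j := fun i j => by
        have : (⅟S * R * ⅟Bh) i j ≤ 0 := by
          have h3 : ∀ i j, 0 ≤ (⅟Bh) i j := by rw [hinvBh]; exact hNhpos
          exact entry_mul_nonpos_left hSR h3 i j
        simpa [Matrix.neg_apply] using neg_nonneg.mpr this
      -- assemble
      have hNdef : True := trivial
      set N : Matrix (Fin (m+1)) (Fin (m+1)) ℝ :=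
        (⅟(fromBlocks Bh Q R D)).submatrix e.symm e.symm with hNdef2
      have hBN : B * N = 1 := by
        have hB : B = (fromBlocks Bh Q R D).submatrix e.symm e.symm := by
          rw [← hfb]
          rw [Matrix.submatrix_submatrix]
          simp [Equiv.self_comp_symm]
        rw [hB, hNdef2, Matrix.submatrix_mul_equiv, mul_invOf_self]
        exact Matrix.submatrix_one_equiv e.symm
      have hNpos : ∀ i j, 0 ≤ N i j := by
        intro i j
        rw [hNdef2]
        show 0 ≤ (⅟(fromBlocks Bh Q R D)) (e.symm i) (e.symm j)
        rw [hblockinv]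
        rcases e.symm i with i' | i' <;> rcases e.symm j with j' | j'
        · exact hTL i' j'
        · exact hTR i' j'
        · exact hBL i' j'
        · exact hinvS i' j'
      exact ⟨hdetB, N, hBN, hNpos⟩

end part2

section powers

lemma pow_entry_nonneg {m : ℕ} {A : Matrix (Fin m) (Fin m) ℝ} (hA : ∀ i j, 0 ≤ A i j) :
    ∀ p (i j : Fin m), 0 ≤ (A ^ p) i j := by
  intro p
  induction p with
  | zero =>
      intro i j
      rw [pow_zero]
      by_cases h : i = j
      · subst h; rw [Matrix.one_apply_eq]; norm_num
      · rw [Matrix.one_apply_ne h]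
  | succ p ih =>
      intro i j
      rw [pow_succ]
      exact entry_mul_nonneg ih hA i j

lemma pow_submatrix_le {n k : ℕ} (hk : k ≤ n) {A : Matrix (Fin n) (Fin n) ℝ}
    (hA : ∀ i j, 0 ≤ A i j) :
    ∀ p (i j : Fin k),
      ((A.submatrix (Fin.castLE hk) (Fin.castLE hk)) ^ p) i j
        ≤ (A ^ p) (Fin.castLE hk i) (Fin.castLE hk j) := by
  intro p
  induction p with
  | zero =>
      intro i j
      rw [pow_zero, pow_zero]
      by_cases h : i = j
      · subst h; rw [Matrix.one_apply_eq, Matrix.one_apply_eq]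
      · rw [Matrix.one_apply_ne h,
          Matrix.one_apply_ne fun hc => h (Fin.castLE_injective hk hc)]
  | succ p ih =>
      intro i j
      rw [pow_succ, pow_succ]
      have hsubnn : ∀ i j : Fin k, 0 ≤ (A.submatrix (Fin.castLE hk) (Fin.castLE hk)) i j :=
        fun i j => hA _ _
      calc ((A.submatrix (Fin.castLE hk) (Fin.castLE hk)) ^ p
              * (A.submatrix (Fin.castLE hk) (Fin.castLE hk))) i j
          ≤ ∑ l : Fin k, (A ^ p) (Fin.castLE hk i) (Fin.castLE hk l)
              * A (Fin.castLE hk l) (Fin.castLE hk j) := by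
            rw [Matrix.mul_apply]
            refine Finset.sum_le_sum fun l _ => ?_
            exact mul_le_mul_of_nonneg_right (ih i l) (hA _ _)
        _ ≤ ∑ l : Fin n, (A ^ p) (Fin.castLE hk i) l * A l (Fin.castLE hk j) := by
            rw [show (∑ l : Fin k, (A ^ p) (Fin.castLE hk i) (Fin.castLE hk l)
                * A (Fin.castLE hk l) (Fin.castLE hk j))
              = ∑ l ∈ Finset.univ.map ⟨Fin.castLE hk, Fin.castLE_injective hk⟩,
                  (A ^ p) (Fin.castLE hk i) l * A l (Fin.castLE hk j) from
              (Finset.sum_map Finset.univ ⟨Fin.castLE hk, Fin.castLE_injective hk⟩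
                (fun l => (A ^ p) (Fin.castLE hk i) l * A l (Fin.castLE hk j))).symm]
            refine Finset.sum_le_sum_of_subset_of_nonneg (Finset.subset_univ _) ?_
            intro l _ _
            exact mul_nonneg (pow_entry_nonneg hA p _ _) (hA _ _)
        _ = ((A ^ p) * A) (Fin.castLE hk i) (Fin.castLE hk j) := by
            rw [Matrix.mul_apply]

end powers

section norm
attribute [local instance] Matrix.linftyOpNormedRing Matrix.linftyOpNormedAlgebra

lemma spec_bound {m : ℕ} [Nonempty (Fin m)] (N : Matrix (Fin m) (Fin m) ℂ) {μ : ℂ}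
    (hμ : μ ∈ spectrum ℂ N) (p : ℕ) : ‖μ‖ ^ p ≤ ‖N ^ p‖ := by
  have h1 : μ ^ p ∈ spectrum ℂ (N ^ p) :=
    spectrum.pow_image_subset N p ⟨μ, hμ, rfl⟩
  have h2 := spectrum.norm_le_norm_of_mem h1
  rwa [norm_pow] at h2

lemma exists_pow_norm_lt {n : ℕ} [Nonempty (Fin n)] (A : Matrix (Fin n) (Fin n) ℝ)
    (h : specRad A < 1) :
    ∃ p : ℕ, 0 < p ∧ ‖(A.map (algebraMap ℝ ℂ)) ^ p‖₊ < 1 := by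
  haveI : CompleteSpace (Matrix (Fin n) (Fin n) ℂ) := FiniteDimensional.complete ℂ _
  set A' := A.map (algebraMap ℝ ℂ) with hA'
  set S := {r : ℝ | ∃ μ : ℂ, μ ∈ spectrum ℂ A' ∧ r = ‖μ‖} with hS
  have hSnonneg : ∀ r ∈ S, 0 ≤ r := by rintro r ⟨μ, hμ, rfl⟩; positivity
  have hs0 : 0 ≤ sSup S := Real.sSup_nonneg hSnonneg
  have hrad : spectralRadius ℂ A' ≤ ENNReal.ofReal (sSup S) := by
    rw [spectralRadius]
    refine iSup₂_le fun μ hμ => ?_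
    have hin : ‖μ‖ ∈ S := ⟨μ, hμ, rfl⟩
    have hb : BddAbove S := by
      refine ⟨‖A'‖, ?_⟩
      rintro r ⟨μ', hμ', rfl⟩
      exact spectrum.norm_le_norm_of_mem hμ'
    have hle : ‖μ‖ ≤ sSup S := le_csSup hb hin
    rw [ENNReal.ofReal]
    refine ENNReal.coe_le_coe.mpr ?_
    rw [Real.le_toNNReal_iff_coe_le hs0]
    simpa using hle
  have hlt : spectralRadius ℂ A' < 1 := by
    refine lt_of_le_of_lt hrad ?_
    rw [show (1 : ENNReal) = ENNReal.ofReal 1 by simp]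
    exact ENNReal.ofReal_lt_ofReal_iff_of_nonneg hs0 |>.mpr h
  have htend := spectrum.pow_nnnorm_pow_one_div_tendsto_nhds_spectralRadius A'
  have hev := (htend.eventually_lt_const hlt).and (Filter.eventually_ge_atTop 1)
  obtain ⟨p, hp, hp1⟩ := hev.exists
  refine ⟨p, hp1, ?_⟩
  by_contra hcon
  push_neg at hcon
  have : (1 : ENNReal) ≤ (‖A' ^ p‖₊ : ENNReal) ^ (1 / (p : ℝ)) := by
    calc (1 : ENNReal) = 1 ^ (1 / (p : ℝ)) := by rw [ENNReal.one_rpow]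
      _ ≤ (‖A' ^ p‖₊ : ENNReal) ^ (1 / (p : ℝ)) := by
          refine ENNReal.rpow_le_rpow ?_ (by positivity)
          exact_mod_cast hcon
  exact absurd hp (not_lt.mpr this)

lemma map_pow_comm {m : ℕ} (M : Matrix (Fin m) (Fin m) ℝ) (p : ℕ) :
    (M.map (algebraMap ℝ ℂ)) ^ p = (M ^ p).map (algebraMap ℝ ℂ) := by
  rw [← RingHom.mapMatrix_apply, ← RingHom.mapMatrix_apply, map_pow]

lemma nnnorm_pow_sub_le {n k : ℕ} (hk : k ≤ n)
    {A : Matrix (Fin n) (Fin n) ℝ} (hA : ∀ i j, 0 ≤ A i j) {t : ℝ}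
    (ht0 : 0 ≤ t) (ht1 : t ≤ 1) (p : ℕ) :
    ‖((t • A.submatrix (Fin.castLE hk) (Fin.castLE hk)).map (algebraMap ℝ ℂ)) ^ p‖₊
      ≤ ‖(A.map (algebraMap ℝ ℂ)) ^ p‖₊ := by
  set Ak := A.submatrix (Fin.castLE hk) (Fin.castLE hk) with hAk
  rw [map_pow_comm, map_pow_comm, Matrix.linfty_opNNNorm_def, Matrix.linfty_opNNNorm_def]
  refine Finset.sup_le fun i _ => ?_
  have hrow : ∑ j : Fin k, ‖((t • Ak) ^ p).map (algebraMap ℝ ℂ) i j‖₊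
      ≤ ∑ j : Fin k, ‖(A ^ p).map (algebraMap ℝ ℂ) (Fin.castLE hk i) (Fin.castLE hk j)‖₊ := by
    refine Finset.sum_le_sum fun j _ => ?_
    rw [← NNReal.coe_le_coe]
    show ‖((t • Ak) ^ p).map (algebraMap ℝ ℂ) i j‖
      ≤ ‖(A ^ p).map (algebraMap ℝ ℂ) (Fin.castLE hk i) (Fin.castLE hk j)‖
    simp only [Matrix.map_apply, Complex.coe_algebraMap, Complex.norm_real, Real.norm_eq_abs]
    have h1 : ((t • Ak) ^ p) i j = t ^ p * (Ak ^ p) i j := by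
      rw [smul_pow]; rfl
    have h2 : 0 ≤ (Ak ^ p) i j := pow_entry_nonneg (fun i j => hA _ _) p i j
    have h3 : 0 ≤ (A ^ p) (Fin.castLE hk i) (Fin.castLE hk j) := pow_entry_nonneg hA p _ _
    have h4 : (Ak ^ p) i j ≤ (A ^ p) (Fin.castLE hk i) (Fin.castLE hk j) :=
      pow_submatrix_le hk hA p i j
    have h5 : 0 ≤ t ^ p := pow_nonneg ht0 p
    have h6 : t ^ p ≤ 1 := pow_le_one₀ ht0 ht1
    rw [h1, abs_of_nonneg (mul_nonneg h5 h2), abs_of_nonneg h3]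
    nlinarith
  refine le_trans hrow ?_
  have hrow2 : ∑ j : Fin k, ‖(A ^ p).map (algebraMap ℝ ℂ) (Fin.castLE hk i) (Fin.castLE hk j)‖₊
      ≤ ∑ j : Fin n, ‖(A ^ p).map (algebraMap ℝ ℂ) (Fin.castLE hk i) j‖₊ := by
    rw [show (∑ j : Fin k, ‖(A ^ p).map (algebraMap ℝ ℂ) (Fin.castLE hk i) (Fin.castLE hk j)‖₊)
        = ∑ j ∈ Finset.univ.map ⟨Fin.castLE hk, Fin.castLE_injective hk⟩,
            ‖(A ^ p).map (algebraMap ℝ ℂ) (Fin.castLE hk i) j‖₊ from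
      (Finset.sum_map Finset.univ ⟨Fin.castLE hk, Fin.castLE_injective hk⟩
        (fun j => ‖(A ^ p).map (algebraMap ℝ ℂ) (Fin.castLE hk i) j‖₊)).symm]
    exact Finset.sum_le_sum_of_subset (Finset.subset_univ _)
  exact le_trans hrow2 (Finset.le_sup
    (f := fun i => ∑ j : Fin n, ‖(A ^ p).map (algebraMap ℝ ℂ) i j‖₊)
    (Finset.mem_univ (Fin.castLE hk i)))

lemma one_mem_spectrum_of_det {m : ℕ} {M : Matrix (Fin m) (Fin m) ℝ}
    (h : ((1 : Matrix (Fin m) (Fin m) ℝ) - M).det = 0) :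
    (1 : ℂ) ∈ spectrum ℂ (M.map (algebraMap ℝ ℂ)) := by
  rw [mem_spectrum_iff', one_smul]
  have heq : (1 : Matrix (Fin m) (Fin m) ℂ) - M.map (algebraMap ℝ ℂ)
      = ((1 - M).map (algebraMap ℝ ℂ)) := by
    ext i j
    simp only [Matrix.sub_apply, Matrix.map_apply, map_sub]
    congr 1
    by_cases hij : i = j
    · subst hij; rw [Matrix.one_apply_eq, Matrix.one_apply_eq]; simp
    · rw [Matrix.one_apply_ne hij, Matrix.one_apply_ne hij]; simp
  rw [heq, ← RingHom.mapMatrix_apply, ← RingHom.map_det, h, map_zero]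

lemma dir_fwd {n : ℕ} {A : Matrix (Fin n) (Fin n) ℝ} (hA : ∀ i j, 0 ≤ A i j)
    (h : specRad A < 1) {k : ℕ} (hk : k ≤ n) (hk0 : 0 < k) :
    0 < leadingMinor (1 - A) k hk := by
  haveI : Nonempty (Fin n) := Fin.pos_iff_nonempty.mp (lt_of_lt_of_le hk0 hk)
  haveI : Nonempty (Fin k) := Fin.pos_iff_nonempty.mp hk0
  obtain ⟨p, hp0, hplt⟩ := exists_pow_norm_lt A h
  set Ak := A.submatrix (Fin.castLE hk) (Fin.castLE hk) with hAk
  set g : ℝ → ℝ := fun t => ((1 : Matrix (Fin k) (Fin k) ℝ) - t • Ak).det with hg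
  have hcont : Continuous g := by
    apply Continuous.matrix_det
    exact continuous_const.sub (continuous_id.smul continuous_const)
  have hg0 : g 0 = 1 := by rw [hg]; simp
  have hgne : ∀ t ∈ Set.Icc (0:ℝ) 1, g t ≠ 0 := by
    intro t ht hzero
    have h1spec := one_mem_spectrum_of_det hzero
    have hb := spec_bound _ h1spec p
    rw [norm_one, one_pow] at hb
    have hcmp := nnnorm_pow_sub_le hk hA ht.1 ht.2 p
    have hup : ‖(A.map (algebraMap ℝ ℂ)) ^ p‖ < 1 := hplt
    have hlow : (1:ℝ) ≤ ‖(A.map (algebraMap ℝ ℂ)) ^ p‖ := le_trans hb hcmp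
    linarith
  have hsub : leadingMinor (1 - A) k hk = g 1 := by
    unfold leadingMinor
    rw [hg]
    congr 1
    ext i j
    simp only [Matrix.sub_apply, Matrix.submatrix_apply, one_smul]
    rw [hAk]
    congr 1
    by_cases hij : i = j
    · subst hij; rw [Matrix.one_apply_eq, Matrix.one_apply_eq]
    · rw [Matrix.one_apply_ne fun hc => hij (Fin.castLE_injective hk hc),
        Matrix.one_apply_ne hij]
  rw [hsub]
  by_contra hle
  push_neg at hle
  have hg1 : g 1 < 0 := lt_of_le_of_ne hle (hgne 1 ⟨zero_le_one, le_rfl⟩)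
  have hmem : (0:ℝ) ∈ Set.Icc (g 1) (g 0) := ⟨hg1.le, by rw [hg0]; exact zero_le_one⟩
  obtain ⟨t, ht, hgt⟩ := intermediate_value_Icc' zero_le_one hcont.continuousOn hmem
  exact hgne t ht hgt

end norm

lemma dir_rev {n : ℕ} {A : Matrix (Fin n) (Fin n) ℝ} (hA : ∀ i j, 0 ≤ A i j)
    (h : ∀ k (hk : k ≤ n), 0 < k → 0 < leadingMinor (1 - A) k hk) : specRad A < 1 := by
  rcases Nat.eq_zero_or_pos n with hn | hn
  · subst hn
    have hempty : {r : ℝ | ∃ μ : ℂ, μ ∈ spectrum ℂ (A.map (algebraMap ℝ ℂ))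
        ∧ r = ‖μ‖} = ∅ := by
      ext r
      simp only [Set.mem_setOf_eq, Set.mem_empty_iff_false, iff_false, not_exists]
      rintro μ ⟨hμ, rfl⟩
      exact (spectrum.mem_iff.mp hμ) (isUnit_of_subsingleton _)
    rw [specRad, hempty, Real.sSup_empty]
    norm_num
  · haveI : Nonempty (Fin n) := Fin.pos_iff_nonempty.mp hn
    obtain ⟨hdet, N, hN1, hNpos⟩ := inv_nonneg_of_minors n A hA h
    set x := N *ᵥ (fun _ => (1:ℝ)) with hx
    have hBx : (1 - A) *ᵥ x = fun _ => 1 := by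
      rw [hx, Matrix.mulVec_mulVec, hN1, Matrix.one_mulVec]
    have hx0 : ∀ i, 0 ≤ x i := fun i => by
      show (0:ℝ) ≤ ∑ j, N i j * (fun _ => (1:ℝ)) j
      exact Finset.sum_nonneg fun j _ => by
        simpa using mul_nonneg (hNpos i j) zero_le_one
    have hAx0 : ∀ i, 0 ≤ (A *ᵥ x) i := fun i => by
      show (0:ℝ) ≤ ∑ j, A i j * x j
      exact Finset.sum_nonneg fun j _ => mul_nonneg (hA i j) (hx0 j)
    have hxeq : ∀ i, x i = 1 + (A *ᵥ x) i := by
      intro i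
      have h1 := congrFun hBx i
      rw [Matrix.sub_mulVec] at h1
      have h2 : ((1 : Matrix (Fin n) (Fin n) ℝ) *ᵥ x) i - (A *ᵥ x) i = 1 := h1
      rw [Matrix.one_mulVec] at h2
      linarith
    have hxpos : ∀ i, 0 < x i := fun i => by
      rw [hxeq i]; linarith [hAx0 i]
    set θ := Finset.univ.sup' Finset.univ_nonempty (fun i => (A *ᵥ x) i / x i) with hθ
    have hθ0 : 0 ≤ θ := by
      obtain ⟨i⟩ := (inferInstance : Nonempty (Fin n))
      refine le_trans (div_nonneg (hAx0 i) (hxpos i).le) ?_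
      exact Finset.le_sup' (f := fun i => (A *ᵥ x) i / x i) (Finset.mem_univ i)
    have hθlt : θ < 1 := by
      rw [hθ, Finset.sup'_lt_iff]
      intro i _
      rw [div_lt_one (hxpos i)]
      have := hxeq i
      linarith
    have hAxθ : ∀ i, (A *ᵥ x) i ≤ θ * x i := fun i => by
      have h1 : (A *ᵥ x) i / x i ≤ θ :=
        Finset.le_sup' (f := fun i => (A *ᵥ x) i / x i) (Finset.mem_univ i)
      rw [div_le_iff₀ (hxpos i)] at h1
      linarith
    exact lt_of_le_of_lt (specRad_le_of_pos_vec hA hxpos hθ0 hAxθ) hθlt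

end M12

theorem stmt12 {n : ℕ} (A : Matrix (Fin n) (Fin n) ℝ) (hA : ∀ i j, 0 ≤ A i j) :
    specRad A < 1 ↔ ∀ k : ℕ, ∀ hk : k ≤ n, 0 < k → 0 < leadingMinor (1 - A) k hk := by
  constructor
  · intro h k hk hk0
    exact M12.dir_fwd hA h hk hk0
  · intro h
    exact M12.dir_rev hA h
end

section
/- Consider the 5×5 matrix B = [[1,0,0,-p,0],[-q,1,0,-r,0],[-s,-m,1,-n,0],[-w,0,0,1,-σ],[-v,0,0,-k,1]] with all parameters p,q,r,s,m,n,w,σ,v,k ≥ 0. If σk + σvp + pw < 1, then all leading principal minors of B are positive. -/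
/-!
The top-left `3 × 3` block is lower unitriangular, so the first three leading minors are `1`.
Expanding along the first row, the remaining two are `1 - p w` and
`1 - σ k - σ v p - p w`; the latter is positive by hypothesis, and hence so is the former,
since `σ k` and `σ v p` are nonnegative.
-/

open Matrix

section
variable (p q r s m n w σ v k : ℝ)

abbrev couplingMatrix : Matrix (Fin 5) (Fin 5) ℝ :=
  !![1, 0, 0, -p, 0;
     -q, 1, 0, -r, 0;
     -s, -m, 1, -n, 0;
     -w, 0, 0, 1, -σ;
     -v, 0, 0, -k, 1]

theorem leadingMinor_couplingMatrix_of_le_three {j : ℕ} (hj5 : j ≤ 5) (hj : j ≤ 3) :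
    leadingMinor (couplingMatrix p q r s m n w σ v k) j hj5 = 1 := by
  interval_cases j <;>
    simp [leadingMinor, det_succ_row_zero, Fin.sum_univ_succ, Fin.succAbove, Fin.castLE]

theorem leadingMinor_couplingMatrix_four (h : 4 ≤ 5) :
    leadingMinor (couplingMatrix p q r s m n w σ v k) 4 h = 1 - p * w := by
  simp [leadingMinor, det_succ_row_zero, Fin.sum_univ_succ, Fin.succAbove, Fin.castLE]
  ring

theorem leadingMinor_couplingMatrix_five (h : 5 ≤ 5) :
    leadingMinor (couplingMatrix p q r s m n w σ v k) 5 h =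
      1 - σ * k - σ * v * p - p * w := by
  simp [leadingMinor, det_succ_row_zero, Fin.sum_univ_succ, Fin.succAbove, Fin.castLE]
  ring

end

theorem stmt13_general (p q r s m n w σ v k : ℝ)
    (hp : 0 ≤ p) (hσ : 0 ≤ σ) (hv : 0 ≤ v) (hk : 0 ≤ k)
    (hcond : σ * k + σ * v * p + p * w < 1) :
    ∀ j : ℕ, ∀ hj : j ≤ 5, 0 < j →
      0 < leadingMinor
        (!![1, 0, 0, -p, 0;
            -q, 1, 0, -r, 0;
            -s, -m, 1, -n, 0;
            -w, 0, 0, 1, -σ;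
            -v, 0, 0, -k, 1]) j hj := by
  intro j hj _
  change 0 < leadingMinor (couplingMatrix p q r s m n w σ v k) j hj
  have hσk : 0 ≤ σ * k := mul_nonneg hσ hk
  have hσvp : 0 ≤ σ * v * p := mul_nonneg (mul_nonneg hσ hv) hp
  rcases (by omega : j ≤ 3 ∨ j = 4 ∨ j = 5) with hj3 | rfl | rfl
  · rw [leadingMinor_couplingMatrix_of_le_three p q r s m n w σ v k hj hj3]
    exact one_pos
  · rw [leadingMinor_couplingMatrix_four]
    linarith
  · rw [leadingMinor_couplingMatrix_five]
    linarith

theorem stmt13 (p q r s m n w σ v k : ℝ)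
    (hp : 0 ≤ p) (hq : 0 ≤ q) (hr : 0 ≤ r) (hs : 0 ≤ s) (hm : 0 ≤ m)
    (hn : 0 ≤ n) (hw : 0 ≤ w) (hσ : 0 ≤ σ) (hv : 0 ≤ v) (hk : 0 ≤ k)
    (hcond : σ * k + σ * v * p + p * w < 1) :
    ∀ j : ℕ, ∀ hj : j ≤ 5, 0 < j →
      0 < leadingMinor
        (!![1, 0, 0, -p, 0;
            -q, 1, 0, -r, 0;
            -s, -m, 1, -n, 0;
            -w, 0, 0, 1, -σ;
            -v, 0, 0, -k, 1]) j hj :=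
  stmt13_general p q r s m n w σ v k hp hσ hv hk hcond
end
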